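/- Let L_n ⊆ S_n be a zigzag language and let π, ρ be two consecutive permutations in J(L_n) that differ in a jump of the value j. Then for every k ∈ {j+1,…,n}, either π^{[k]} = c_1(π^{[k−1]}) and ρ^{[k]} = c_1(ρ^{[k−1]}), or π^{[k]} = c_k(π^{[k−1]}) and ρ^{[k]} = c_k(ρ^{[k−1]}); that is, each value k > j occupies the first position in both π^{[k]} and ρ^{[k]}, or the last position in both. -/

import Mathlib

/-!
Shared definitions: permutations in one-line notation as lists of naturals,
deletion `p`, insertion `c_i`, zigzag languages, the Gray code sequence `J(L_n)`,
jumps, minimal jumps, the auxiliary sequences `s_n^π`, Algorithm M,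
vincular pattern containment and 2-clumped permutations.
-/

/-- `S_n`: permutations of `{1,…,n}` in one-line notation, as lists of naturals. -/
def SymmList (n : ℕ) : Set (List ℕ) := {l | List.Perm l (List.range' 1 n)}

/-- The identity permutation `id_n = 1 2 ⋯ n`. -/
def idPerm (n : ℕ) : List ℕ := List.range' 1 n

/-- `p(π)`: delete the largest entry `n = π.length` from the permutation `π ∈ S_n`. -/
def pdel (l : List ℕ) : List ℕ := l.erase l.length

/-- `c_i(π)`: insert the new largest value `π.length + 1` at (1-indexed) position `i`. -/
def cins (i : ℕ) (l : List ℕ) : List ℕ :=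
  l.take (i - 1) ++ (l.length + 1) :: l.drop (i - 1)

/-- Zigzag languages of permutations: `L_0 = {ε}` is a zigzag language, and
`L ⊆ S_{n+1}` is a zigzag language if `p(L)` is a zigzag language and
`c_1(π), c_{n+1}(π) ∈ L` for every `π ∈ p(L)`. -/
inductive IsZigzag : ℕ → Set (List ℕ) → Prop
  | zero : IsZigzag 0 {[]}
  | succ (n : ℕ) (L : Set (List ℕ)) :
      L ⊆ SymmList (n + 1) →
      IsZigzag n (pdel '' L) →
      (∀ l ∈ pdel '' L, cins 1 l ∈ L ∧ cins (n + 1) l ∈ L) →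
      IsZigzag (n + 1) L

/-- `→c(π)`: the sequence of those `c_1(π),…,c_n(π)` lying in `L`,
in increasing order of the insertion position. -/
noncomputable def cSeq (L : Set (List ℕ)) (n : ℕ) (l : List ℕ) : List (List ℕ) :=
  ((List.range' 1 n).map (fun i => cins i l)).filter
    (fun x => @decide (x ∈ L) (Classical.propDecidable _))

/-- The Gray code sequence `J(L_n)` of a language `L ⊆ S_n`:
`J(L_0) = ε`, and `J(L_{n+1})` is obtained from `J(L_n)` (for the language
`p(L)`) by replacing its entries alternately by `←c(π)` (the reverse of
`→c(π)`) and `→c(π)`. -/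
noncomputable def Jseq : ℕ → Set (List ℕ) → List (List ℕ)
  | 0, _ => [[]]
  | (n + 1), L =>
      (((Jseq n (pdel '' L)).mapIdx
        (fun k π => if k % 2 = 0 then (cSeq L (n + 1) π).reverse
                    else cSeq L (n + 1) π)).flatten)

/-- `ρ` is obtained from `π` by a right jump of the value `v` by `d` steps. -/
def RightJump (π ρ : List ℕ) (v d : ℕ) : Prop :=
  0 < d ∧ ∃ A B C : List ℕ, B.length = d ∧ (∀ x ∈ B, x < v) ∧
    π = A ++ v :: (B ++ C) ∧ ρ = A ++ (B ++ v :: C)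

/-- `ρ` is obtained from `π` by a left jump of the value `v` by `d` steps. -/
def LeftJump (π ρ : List ℕ) (v d : ℕ) : Prop := RightJump ρ π v d

/-- A right jump that is minimal with respect to `L`: every right jump of the
same value by fewer steps yields a permutation not in `L`. -/
def MinimalRightJump (L : Set (List ℕ)) (π ρ : List ℕ) (v d : ℕ) : Prop :=
  RightJump π ρ v d ∧ ∀ d' ρ', d' < d → RightJump π ρ' v d' → ρ' ∉ L

/-- A left jump that is minimal with respect to `L`. -/
def MinimalLeftJump (L : Set (List ℕ)) (π ρ : List ℕ) (v d : ℕ) : Prop :=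
  LeftJump π ρ v d ∧ ∀ d' ρ', d' < d → LeftJump π ρ' v d' → ρ' ∉ L

/-- The auxiliary sequence `s_n^π` of a permutation `π` occurring in `J(L_n)`,
as a function of the index `i ∈ {1,…,n}` (value `0` outside this range). -/
noncomputable def sVec : ℕ → Set (List ℕ) → List ℕ → ℕ → ℕ
  | 0, _, _, _ => 0
  | 1, _, _, i => if i = 1 then 1 else 0
  | (n + 2), L, π, i =>
      let L' := pdel '' L
      let π' := pdel π
      let cbar := if ((Jseq (n + 1) L').idxOf π') % 2 = 0
                  then (cSeq L (n + 2) π').reverse else cSeq L (n + 2) π'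
      if cbar.getLast? = some π then
        (if i ≤ n then sVec (n + 1) L' π' i
         else if i = n + 1 then n + 1
         else if i = n + 2 then sVec (n + 1) L' π' (n + 1) else 0)
      else
        (if i ≤ n + 1 then sVec (n + 1) L' π' i
         else if i = n + 2 then n + 2 else 0)

/-- `j` is at the first position of `l`, or the entry immediately left of `j`
in `l` is larger than `j`. -/
def AtLeftTurn (l : List ℕ) (j : ℕ) : Prop :=
  ∃ A B : List ℕ, l = A ++ j :: B ∧ (A = [] ∨ ∃ x, A.getLast? = some x ∧ j < x)

/-- `j` is at the last position of `l`, or the entry immediately right of `j`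
in `l` is larger than `j`. -/
def AtRightTurn (l : List ℕ) (j : ℕ) : Prop :=
  ∃ A B : List ℕ, l = A ++ j :: B ∧ (B = [] ∨ ∃ x, B.head? = some x ∧ j < x)

/-- `j` is not at the first position of `l`, and the entry immediately left of
`j` in `l` is smaller than `j`. -/
def SmallerLeftNeighbor (l : List ℕ) (j : ℕ) : Prop :=
  ∃ A B : List ℕ, ∃ x, l = A ++ j :: B ∧ A.getLast? = some x ∧ x < j

/-- `j` is not at the last position of `l`, and the entry immediately right of
`j` in `l` is smaller than `j`. -/
def SmallerRightNeighbor (l : List ℕ) (j : ℕ) : Prop :=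
  ∃ A B : List ℕ, ∃ x, l = A ++ j :: B ∧ B.head? = some x ∧ x < j

/-- A state of Algorithm M: the current permutation `π` and the auxiliary
arrays `o` and `s`; `o j = false` encodes direction `L` (left) and
`o j = true` encodes `R` (right). -/
structure MState where
  perm : List ℕ
  o : ℕ → Bool
  s : ℕ → ℕ

/-- The initial state of Algorithm M (step M1): `π = id_n`, `o_j = L`, `s_j = j`. -/
def MInit (n : ℕ) : MState := ⟨idPerm n, fun _ => false, fun j => j⟩

/-- One iteration (steps M3–M5) of Algorithm M on a language `L ⊆ S_n`:
with `j := s_n ≠ 1`, the permutation jumps minimally in the direction `o_j`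
(step M4), and the arrays `o`, `s` are updated as in step M5. -/
def MStep (L : Set (List ℕ)) (n : ℕ) (σ σ' : MState) : Prop :=
  σ.s n ≠ 1 ∧
  σ'.perm ∈ L ∧
  ((σ.o (σ.s n) = false ∧ ∃ d, MinimalLeftJump L σ.perm σ'.perm (σ.s n) d) ∨
   (σ.o (σ.s n) = true ∧ ∃ d, MinimalRightJump L σ.perm σ'.perm (σ.s n) d)) ∧
  (((σ.o (σ.s n) = false ∧ AtLeftTurn σ'.perm (σ.s n)) ∨
    (σ.o (σ.s n) = true ∧ AtRightTurn σ'.perm (σ.s n))) →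
      σ'.o = Function.update σ.o (σ.s n) (!σ.o (σ.s n)) ∧
      σ'.s = Function.update (Function.update (Function.update σ.s n n) (σ.s n)
               ((Function.update σ.s n n) (σ.s n - 1))) (σ.s n - 1) (σ.s n - 1)) ∧
  (¬ ((σ.o (σ.s n) = false ∧ AtLeftTurn σ'.perm (σ.s n)) ∨
      (σ.o (σ.s n) = true ∧ AtRightTurn σ'.perm (σ.s n))) →
      σ'.o = σ.o ∧ σ'.s = Function.update σ.s n n)

/-- `π` contains the vincular pattern `pat` whose marked adjacent pair starts
at (0-indexed) position `k` of `pat`. -/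
def ContainsVincular (π pat : List ℕ) (k : ℕ) : Prop :=
  ∃ f : ℕ → ℕ, StrictMonoOn f (Set.Iio pat.length) ∧
    (∀ i < pat.length, f i < π.length) ∧
    f (k + 1) = f k + 1 ∧
    (∀ i < pat.length, ∀ j < pat.length,
      (pat.getD i 0 < pat.getD j 0 ↔ π.getD (f i) 0 < π.getD (f j) 0))

/-- 2-clumped permutations: those avoiding the vincular patterns
`3(51)24`, `3(51)42`, `24(51)3` and `42(51)3`. -/
def TwoClumped (π : List ℕ) : Prop :=
  ¬ ContainsVincular π [3, 5, 1, 2, 4] 1 ∧ ¬ ContainsVincular π [3, 5, 1, 4, 2] 1 ∧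
  ¬ ContainsVincular π [2, 4, 5, 1, 3] 2 ∧ ¬ ContainsVincular π [4, 2, 5, 1, 3] 2

/-- `S'_n`: the set of 2-clumped permutations in `S_n`. -/
def SClump (n : ℕ) : Set (List ℕ) := {l ∈ SymmList n | TwoClumped l}

/-- `B_n`: the permutations obtained from `1` by repeatedly inserting the new
largest value at the first or the last position. -/
def Bset : ℕ → Set (List ℕ)
  | 0 => {[]}
  | 1 => {[1]}
  | (n + 2) => {l | ∃ π ∈ Bset (n + 1), l = cins 1 π ∨ l = cins (n + 2) π}

/-!
Induction on `n`. `J(L_{n+1})` is the concatenation of the blocks `c(σ)`, alternately reversed,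
for `σ` running through `J(L_n)`. Inside one block only the position of `n+1` changes, so a jump
of a value `j ≤ n` happens between two blocks: the alternation of `←c` and `→c` makes both
permutations `c_1` of consecutive entries of `J(L_n)`, or both `c_{n+1}`, and those entries
differ in the same jump of `j`.
-/

lemma List.getElem?_flatten_succ_cases {α : Type*} :
    ∀ {xs : List (List α)} {k : ℕ} {a b : α}, (∀ l ∈ xs, l ≠ []) →
      xs.flatten[k]? = some a → xs.flatten[k + 1]? = some b →
      (∃ l ∈ xs, a ∈ l ∧ b ∈ l) ∨
      ∃ t l l', xs[t]? = some l ∧ xs[t + 1]? = some l' ∧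
        l.getLast? = some a ∧ l'.head? = some b
  | [], _, _, _, _, ha, _ => by simp at ha
  | l :: xs, k, a, b, hne, ha, hb => by
    rw [List.flatten_cons, List.getElem?_append] at ha hb
    rcases lt_trichotomy (k + 1) l.length with hk | hk | hk
    · rw [if_pos (by omega)] at ha
      rw [if_pos hk] at hb
      exact .inl ⟨l, by simp, List.mem_of_getElem? ha, List.mem_of_getElem? hb⟩
    · rw [if_pos (by omega)] at ha
      rw [if_neg (by omega), hk, Nat.sub_self] at hb
      obtain _ | ⟨l', xs⟩ := xs
      · simp at hb
      · rw [List.flatten_cons, List.getElem?_append_left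
          (List.length_pos_iff.2 (hne l' (by simp)))] at hb
        refine .inr ⟨0, l, l', rfl, rfl, ?_, by rwa [List.head?_eq_getElem?]⟩
        rwa [List.getLast?_eq_getElem?, show l.length - 1 = k by omega]
    · rw [if_neg (by omega)] at ha
      rw [if_neg (by omega), show k + 1 - l.length = k - l.length + 1 by omega] at hb
      rcases List.getElem?_flatten_succ_cases (fun l' hl' => hne l' (.tail _ hl')) ha hb with
        ⟨l', hl', hal', hbl'⟩ | ⟨t, l₁, l₂, h₁, h₂, hlast, hhead⟩
      · exact .inl ⟨l', .tail _ hl', hal', hbl'⟩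
      · exact .inr ⟨t + 1, l₁, l₂, h₁, h₂, hlast, hhead⟩

section SymmList

variable {n : ℕ} {l : List ℕ}

lemma length_of_mem_symmList (h : l ∈ SymmList n) : l.length = n :=
  h.length_eq.trans List.length_range'

lemma succ_not_mem_of_mem_symmList (h : l ∈ SymmList n) : n + 1 ∉ l := fun hn => by
  have := List.mem_range'_1.1 (h.mem_iff.1 hn)
  omega

end SymmList

section Insertion

lemma cins_one (l : List ℕ) : cins 1 l = (l.length + 1) :: l := by
  simp [cins]

lemma cins_length_succ (l : List ℕ) : cins (l.length + 1) l = l ++ [l.length + 1] := by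
  simp [cins]

lemma pdel_cins {l : List ℕ} (hl : l.length + 1 ∉ l) (i : ℕ) : pdel (cins i l) = l := by
  have hlen : (cins i l).length = l.length + 1 := by
    simp only [cins, List.length_append, List.length_take, List.length_cons, List.length_drop]
    omega
  rw [pdel, hlen, cins, List.erase_append_right _ (fun h => hl (List.take_subset _ _ h)),
    List.erase_cons_head, List.take_append_drop]

lemma pdel_cins_of_mem_symmList {l : List ℕ} {n : ℕ} (hl : l ∈ SymmList n) (i : ℕ) :
    pdel (cins i l) = l :=
  pdel_cins (length_of_mem_symmList hl ▸ succ_not_mem_of_mem_symmList hl) i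

end Insertion

namespace RightJump

variable {π ρ : List ℕ} {v d : ℕ}

lemma length_eq (h : RightJump π ρ v d) : ρ.length = π.length := by
  obtain ⟨-, A, B, C, -, -, rfl, rfl⟩ := h
  simp only [List.length_append, List.length_cons]
  omega

lemma ne (h : RightJump π ρ v d) : π ≠ ρ := by
  obtain ⟨hd, A, B, C, hB, hBv, rfl, rfl⟩ := h
  obtain ⟨x, B, rfl⟩ := List.exists_cons_of_ne_nil (List.ne_nil_of_length_pos (hB ▸ hd))
  have := hBv x List.mem_cons_self
  intro heq
  simp only [List.cons_append, List.append_cancel_left_eq, List.cons.injEq] at heq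
  omega

lemma reverse (h : RightJump π ρ v d) : RightJump ρ.reverse π.reverse v d := by
  obtain ⟨hd, A, B, C, hB, hBv, rfl, rfl⟩ := h
  exact ⟨hd, C.reverse, B.reverse, A.reverse, by simpa using hB,
    fun x hx => hBv x (List.mem_reverse.1 hx), by simp, by simp⟩

lemma of_cons {x : ℕ} {a b : List ℕ} (h : RightJump (x :: a) (x :: b) v d) :
    RightJump a b v d := by
  obtain ⟨hd, A, B, C, hB, hBv, hπ, hρ⟩ := h
  obtain ⟨y, B, rfl⟩ := List.exists_cons_of_ne_nil (List.ne_nil_of_length_pos (hB ▸ hd))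
  have hyv := hBv y List.mem_cons_self
  obtain _ | ⟨z, A⟩ := A
  · simp only [List.nil_append, List.cons_append, List.cons.injEq] at hπ hρ
    omega
  · simp only [List.cons_append, List.cons.injEq] at hπ hρ
    exact ⟨hd, A, y :: B, C, hB, hBv, hπ.2, hρ.2⟩

lemma of_append_singleton {x : ℕ} {a b : List ℕ} (h : RightJump (a ++ [x]) (b ++ [x]) v d) :
    RightJump a b v d := by
  have h' : RightJump (x :: b.reverse) (x :: a.reverse) v d := by simpa using h.reverse
  simpa using h'.of_cons.reverse

lemma erase (h : RightJump π ρ v d) {w : ℕ} (hvw : v < w) :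
    RightJump (π.erase w) (ρ.erase w) v d := by
  obtain ⟨hd, A, B, C, hB, hBv, rfl, rfl⟩ := h
  have hwB : w ∉ B := fun hw => (hBv w hw).not_gt hvw
  have hwv : ¬(v == w) = true := by simpa using hvw.ne
  by_cases hwA : w ∈ A
  · simp only [List.erase_append_left _ hwA]
    exact ⟨hd, A.erase w, B, C, hB, hBv, rfl, rfl⟩
  · simp only [List.erase_append_right _ hwA, List.erase_cons_tail hwv,
      List.erase_append_right _ hwB]
    exact ⟨hd, A, B, C.erase w, hB, hBv, rfl, rfl⟩

lemma pdel_ne (h : RightJump π ρ v d) (hv : v < π.length) : pdel π ≠ pdel ρ := by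
  simpa only [pdel, h.length_eq] using (h.erase hv).ne

end RightJump

def DifferInJump (π ρ : List ℕ) (j : ℕ) : Prop :=
  ∃ d, LeftJump π ρ j d ∨ RightJump π ρ j d

namespace DifferInJump

variable {π ρ : List ℕ} {j : ℕ}

lemma of_cins_one {σ τ : List ℕ} (hlen : σ.length = τ.length)
    (h : DifferInJump (cins 1 σ) (cins 1 τ) j) : DifferInJump σ τ j := by
  rw [cins_one, cins_one, hlen] at h
  obtain ⟨d, h | h⟩ := h
  exacts [⟨d, .inl h.of_cons⟩, ⟨d, .inr h.of_cons⟩]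

lemma of_cins_last {σ τ : List ℕ} {n : ℕ} (hσ : σ.length = n) (hτ : τ.length = n)
    (h : DifferInJump (cins (n + 1) σ) (cins (n + 1) τ) j) : DifferInJump σ τ j := by
  rw [← hσ, cins_length_succ, hσ, ← hτ, cins_length_succ, hτ] at h
  obtain ⟨d, h | h⟩ := h
  exacts [⟨d, .inl h.of_append_singleton⟩, ⟨d, .inr h.of_append_singleton⟩]

lemma pdel_ne (h : DifferInJump π ρ j) (hj : j < π.length) : pdel π ≠ pdel ρ := by
  obtain ⟨d, h | h⟩ := h
  · exact (h.pdel_ne (h.length_eq ▸ hj)).symm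
  · exact h.pdel_ne hj

end DifferInJump

namespace IsZigzag

variable {n : ℕ} {L : Set (List ℕ)}

lemma subset_symmList (hL : IsZigzag n L) : L ⊆ SymmList n := by
  cases hL with
  | zero => rintro l rfl; exact List.Perm.refl _
  | succ _ _ hsub => exact hsub

lemma pdel_image (hL : IsZigzag (n + 1) L) : IsZigzag n (pdel '' L) := by
  cases hL with
  | succ _ _ _ hp => exact hp

lemma cins_mem (hL : IsZigzag (n + 1) L) {σ : List ℕ} (hσ : σ ∈ pdel '' L) :
    cins 1 σ ∈ L ∧ cins (n + 1) σ ∈ L := by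
  cases hL with
  | succ _ _ _ _ hc => exact hc σ hσ

end IsZigzag

section CSeq

open Classical

variable {L : Set (List ℕ)} {n : ℕ} {σ : List ℕ}

lemma mem_cSeq {x : List ℕ} : x ∈ cSeq L n σ ↔ x ∈ L ∧ ∃ i ∈ List.range' 1 n, cins i σ = x := by
  rw [cSeq, List.mem_filter, List.mem_map, decide_eq_true_iff, and_comm]

lemma cSeq_head? (h : cins 1 σ ∈ L) : (cSeq L (n + 1) σ).head? = some (cins 1 σ) := by
  rw [cSeq, List.range'_succ, List.map_cons, List.filter_cons, decide_eq_true h, if_pos rfl,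
    List.head?_cons]

lemma cSeq_getLast? (h : cins (n + 1) σ ∈ L) :
    (cSeq L (n + 1) σ).getLast? = some (cins (n + 1) σ) := by
  rw [cSeq, List.range'_concat, show 1 + 1 * n = n + 1 by omega, List.map_append,
    List.filter_append, List.map_singleton, List.filter_singleton, decide_eq_true h, cond_true,
    List.getLast?_concat]

end CSeq

section Blocks

variable {L : Set (List ℕ)} {n : ℕ} {σ : List ℕ}

/-- The block of `J(L)` replacing the `t`-th entry `σ` of `J(p(L))`: `←c(σ)` for even `t`,
`→c(σ)` for odd `t`. -/
noncomputable def zigzagBlock (L : Set (List ℕ)) (n t : ℕ) (σ : List ℕ) : List (List ℕ) :=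
  if t % 2 = 0 then (cSeq L n σ).reverse else cSeq L n σ

lemma Jseq_succ (L : Set (List ℕ)) (n : ℕ) :
    Jseq (n + 1) L = ((Jseq n (pdel '' L)).mapIdx (zigzagBlock L (n + 1))).flatten := by
  rw [Jseq]; rfl

lemma mem_zigzagBlock {t : ℕ} {x : List ℕ} :
    x ∈ zigzagBlock L n t σ ↔ x ∈ cSeq L n σ := by
  unfold zigzagBlock; split_ifs <;> simp

lemma zigzagBlock_head? {t : ℕ} (h1 : cins 1 σ ∈ L) (hlast : cins (n + 1) σ ∈ L) :
    (zigzagBlock L (n + 1) t σ).head? =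
      some (if t % 2 = 0 then cins (n + 1) σ else cins 1 σ) := by
  unfold zigzagBlock
  split_ifs
  · rw [List.head?_reverse, cSeq_getLast? hlast]
  · rw [cSeq_head? h1]

lemma zigzagBlock_getLast? {t : ℕ} (h1 : cins 1 σ ∈ L) (hlast : cins (n + 1) σ ∈ L) :
    (zigzagBlock L (n + 1) t σ).getLast? =
      some (if t % 2 = 0 then cins 1 σ else cins (n + 1) σ) := by
  unfold zigzagBlock
  split_ifs
  · rw [List.getLast?_reverse, cSeq_head? h1]
  · rw [cSeq_getLast? hlast]

end Blocks

lemma mem_of_mem_Jseq {n : ℕ} {L : Set (List ℕ)} (hL : IsZigzag n L) {π : List ℕ}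
    (hπ : π ∈ Jseq n L) : π ∈ L := by
  cases hL with
  | zero => simpa [Jseq] using hπ
  | succ n L _ _ _ =>
    simp only [Jseq_succ, List.mem_flatten, List.mem_mapIdx] at hπ
    obtain ⟨-, ⟨t, ht, rfl⟩, hπ⟩ := hπ
    exact (mem_cSeq.1 (mem_zigzagBlock.1 hπ)).1

lemma mem_symmList_of_getElem?_Jseq {n : ℕ} {L : Set (List ℕ)} (hL : IsZigzag n L) {t : ℕ}
    {π : List ℕ} (hπ : (Jseq n L)[t]? = some π) : π ∈ SymmList n :=
  hL.subset_symmList (mem_of_mem_Jseq hL (List.mem_of_getElem? hπ))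

lemma Jseq_succ_consecutive {n : ℕ} {L : Set (List ℕ)} (hL : IsZigzag (n + 1) L)
    {k : ℕ} {π ρ : List ℕ}
    (hπ : (Jseq (n + 1) L)[k]? = some π) (hρ : (Jseq (n + 1) L)[k + 1]? = some ρ) :
    pdel π = pdel ρ ∨
    ∃ t σ τ, (Jseq n (pdel '' L))[t]? = some σ ∧ (Jseq n (pdel '' L))[t + 1]? = some τ ∧
      ((π = cins 1 σ ∧ ρ = cins 1 τ) ∨ (π = cins (n + 1) σ ∧ ρ = cins (n + 1) τ)) := by
  have hends {σ : List ℕ} (hσ : σ ∈ Jseq n (pdel '' L)) :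
      cins 1 σ ∈ L ∧ cins (n + 1) σ ∈ L :=
    hL.cins_mem (mem_of_mem_Jseq hL.pdel_image hσ)
  have hne : ∀ l ∈ (Jseq n (pdel '' L)).mapIdx (zigzagBlock L (n + 1)), l ≠ [] := by
    rintro l hl rfl
    obtain ⟨t, ht, hl⟩ := List.mem_mapIdx.1 hl
    have hσ := List.getElem_mem ht
    simpa [hl] using zigzagBlock_head? (t := t) (hends hσ).1 (hends hσ).2
  rw [Jseq_succ] at hπ hρ
  rcases List.getElem?_flatten_succ_cases hne hπ hρ with
    ⟨l, hl, hπl, hρl⟩ | ⟨t, l, l', hl, hl', hlast, hhead⟩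
  · left
    obtain ⟨t, ht, rfl⟩ := List.mem_mapIdx.1 hl
    have hσS := mem_symmList_of_getElem?_Jseq hL.pdel_image (List.getElem?_eq_getElem ht)
    obtain ⟨-, i, -, rfl⟩ := mem_cSeq.1 (mem_zigzagBlock.1 hπl)
    obtain ⟨-, i', -, rfl⟩ := mem_cSeq.1 (mem_zigzagBlock.1 hρl)
    rw [pdel_cins_of_mem_symmList hσS, pdel_cins_of_mem_symmList hσS]
  · right
    rw [List.getElem?_mapIdx] at hl hl'
    obtain ⟨σ, hσ, rfl⟩ := Option.map_eq_some_iff.1 hl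
    obtain ⟨τ, hτ, rfl⟩ := Option.map_eq_some_iff.1 hl'
    have hσL := hends (List.mem_of_getElem? hσ)
    have hτL := hends (List.mem_of_getElem? hτ)
    rw [zigzagBlock_getLast? hσL.1 hσL.2, Option.some_inj] at hlast
    rw [zigzagBlock_head? hτL.1 hτL.2, Option.some_inj] at hhead
    refine ⟨t, σ, τ, hσ, hτ, ?_⟩
    by_cases ht : t % 2 = 0
    · rw [if_pos ht] at hlast
      rw [if_neg (by omega)] at hhead
      exact .inl ⟨hlast.symm, hhead.symm⟩
    · rw [if_neg ht] at hlast
      rw [if_pos (by omega)] at hhead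
      exact .inr ⟨hlast.symm, hhead.symm⟩

/-- Let `L_n ⊆ S_n` be a zigzag language and let `π, ρ` be two
consecutive permutations in `J(L_n)` that differ in a jump of the value `j`.
Then for every `k ∈ {j+1,…,n}`, either `π^{[k]} = c_1(π^{[k−1]})` and
`ρ^{[k]} = c_1(ρ^{[k−1]})`, or `π^{[k]} = c_k(π^{[k−1]})` and
`ρ^{[k]} = c_k(ρ^{[k−1]})`. -/
theorem Jseq_jump_boundary_values (n : ℕ) (L : Set (List ℕ)) (hL : IsZigzag n L)
    (k : ℕ) (π ρ : List ℕ)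
    (hπ : (Jseq n L)[k]? = some π) (hρ : (Jseq n L)[k + 1]? = some ρ)
    (j : ℕ) (hjump : ∃ d, LeftJump π ρ j d ∨ RightJump π ρ j d) :
    ∀ m, j + 1 ≤ m → m ≤ n →
      (pdel^[n - m] π = cins 1 (pdel^[n - m + 1] π) ∧
       pdel^[n - m] ρ = cins 1 (pdel^[n - m + 1] ρ)) ∨
      (pdel^[n - m] π = cins m (pdel^[n - m + 1] π) ∧
       pdel^[n - m] ρ = cins m (pdel^[n - m + 1] ρ)) := by
  induction n generalizing L k π ρ with
  | zero => intro m hjm hmn; omega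
  | succ n ih =>
    intro m hjm hmn
    have hL' := hL.pdel_image
    have hπS := mem_symmList_of_getElem?_Jseq hL hπ
    obtain ⟨t, σ, τ, hσ, hτ, hends⟩ := (Jseq_succ_consecutive hL hπ hρ).resolve_left
      (DifferInJump.pdel_ne hjump (by rw [length_of_mem_symmList hπS]; omega))
    have hσS := mem_symmList_of_getElem?_Jseq hL' hσ
    have hτS := mem_symmList_of_getElem?_Jseq hL' hτ
    have hpdel : pdel π = σ ∧ pdel ρ = τ := by
      rcases hends with ⟨rfl, rfl⟩ | ⟨rfl, rfl⟩ <;>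
        exact ⟨pdel_cins_of_mem_symmList hσS _, pdel_cins_of_mem_symmList hτS _⟩
    obtain rfl | hm := hmn.eq_or_lt
    · simpa [hpdel] using hends
    have hjump' : DifferInJump σ τ j := by
      rcases hends with ⟨rfl, rfl⟩ | ⟨rfl, rfl⟩
      · exact DifferInJump.of_cins_one
          (by rw [length_of_mem_symmList hσS, length_of_mem_symmList hτS]) hjump
      · exact DifferInJump.of_cins_last (length_of_mem_symmList hσS)
          (length_of_mem_symmList hτS) hjump
    rw [show n + 1 - m = n - m + 1 by omega]
    simp only [Function.iterate_succ_apply, hpdel]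
    exact ih _ hL' t σ τ hσ hτ hjump' m hjm (by omega)
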